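/- arXiv:2602.24146 — 6 statements merged into one kernel-verified Lean document; each statement's English description precedes it below -/
import Mathlib

section
/- For every real x ≥ 4, log( x / log(x+1) + 1 ) ≥ (1/2) · log(x+1). -/
theorem log_div_log_ineq (x : ℝ) (hx : 4 ≤ x) :
    Real.log (x / Real.log (x + 1) + 1) ≥ (1 / 2) * Real.log (x + 1) := by
  have hx1 : (1:ℝ) < x + 1 := by linarith
  have hx0 : (0:ℝ) < x + 1 := by linarith
  set L := Real.log (x + 1) with hL
  have hLpos : 0 < L := Real.log_pos hx1
  set s := Real.sqrt (x + 1) with hs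
  have hspos : 0 < s := Real.sqrt_pos.mpr hx0
  have hs2 : s ^ 2 = x + 1 := Real.sq_sqrt hx0.le
  have hs1 : 1 < s := by nlinarith [hs2]
  -- log s ≤ s / 2
  set u := Real.sqrt s with hu
  have hupos : 0 < u := Real.sqrt_pos.mpr hspos
  have hu2 : u ^ 2 = s := Real.sq_sqrt hspos.le
  have hlogu : Real.log u ≤ u - 1 := Real.log_le_sub_one_of_pos hupos
  have hlogs : Real.log s = 2 * Real.log u := by
    rw [hu, Real.log_sqrt hspos.le]; ring
  have hlogs_le : Real.log s ≤ s / 2 := by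
    rw [hlogs]; nlinarith [sq_nonneg (u - 2)]
  -- L = 2 log s
  have hLs : L = 2 * Real.log s := by
    rw [hL, hs, Real.log_sqrt hx0.le]; ring
  have hLle : L ≤ s := by rw [hLs]; linarith
  -- x / L + 1 ≥ s
  have key : s ≤ x / L + 1 := by
    rw [← sub_le_iff_le_add, le_div_iff₀ hLpos]
    nlinarith [hLle, hs2, hs1]
  have hfin : Real.log s ≤ Real.log (x / L + 1) :=
    Real.log_le_log hspos key
  calc (1/2) * L = Real.log s := by rw [hLs]; ring
    _ ≤ Real.log (x / L + 1) := hfin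
end

section
/- Let K ≥ 1 be an integer, let b > 0 and σ > 0 be reals with σ² ≤ b². For each a ∈ {1,…,K} let {X_{a,s}}_{s≥1} be random variables taking values in [0,1], all mutually independent (across both a and s), such that for each a the X_{a,s} are identically distributed with mean d_a, satisfy |X_{a,s} − d_a| ≤ b almost surely, and Var(X_{a,s}) ≤ σ². Let C > 0 be a real number and suppose T = C / ( Σ_{a=1}^K f(b,σ,d_a) ) is a positive integer. Then Pr( Σ_{s=1}^T Σ_{a=1}^K X_{a,s} > C ) ≤ exp(−T). -/
open MeasureTheory ProbabilityTheory

/-- The effective consumption measure. -/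
noncomputable def f (b σ d : ℝ) : ℝ :=
  4 * b / Real.log (4 * b ^ 2 / σ ^ 2 + 1) + d

/-!
Chernoff's bound at the rate `t = log (4 b² / σ² + 1) / (2 b)`. By Bennett's inequality, a summand
with mean `d`, deviation at most `b` and variance at most `σ²` has
`mgf ≤ exp (t d + σ² / b² (e^{t b} - t b - 1))`. At this rate `e^{2 t b} = 4 b² / σ² + 1`, so the
Bennett term is at most `1` (from `4 (e^x - x - 1) ≤ e^{2x} - 1`), while `t · 4 b / log (…) = 2`;
hence each summand has `mgf ≤ exp (t f(b,σ,d) - 1)`. By independence, the sum `S` of the `T K`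
summands satisfies
`P(S ≥ C) ≤ exp (-t C + T (t ∑ₐ f(b,σ,dₐ) - K)) = exp (-T K) ≤ exp (-T)`.
-/

open Real Finset
open scoped Nat

lemma hasSum_exp_sub_sub_one (x : ℝ) :
    HasSum (fun n : ℕ ↦ x ^ (n + 2) / (n + 2)!) (exp x - x - 1) := by
  have h := (hasSum_nat_add_iff' 2).mpr (exp_eq_exp_ℝ ▸ NormedSpace.expSeries_div_hasSum_exp x)
  have h2 : ∑ i ∈ range 2, x ^ i / (i ! : ℝ) = x + 1 := by norm_num [sum_range_succ]; ring
  rwa [h2, ← sub_sub] at h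

lemma exp_sub_sub_one_le_of_abs_le {x t : ℝ} (ht : 0 < t) (hxt : |x| ≤ t) :
    exp x - x - 1 ≤ x ^ 2 / t ^ 2 * (exp t - t - 1) := by
  refine hasSum_le (fun n ↦ ?_) (hasSum_exp_sub_sub_one x) ((hasSum_exp_sub_sub_one t).mul_left _)
  rw [← mul_div_assoc]
  gcongr
  calc x ^ (n + 2) ≤ |x| ^ (n + 2) := (le_abs_self _).trans (abs_pow x _).le
    _ = x ^ 2 * |x| ^ n := by rw [pow_add, sq_abs, mul_comm]
    _ ≤ x ^ 2 * t ^ n := by gcongr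
    _ = x ^ 2 / t ^ 2 * t ^ (n + 2) := by field_simp; ring

lemma four_mul_exp_sub_sub_one_le {x : ℝ} (hx : 0 ≤ x) :
    4 * (exp x - x - 1) ≤ exp (2 * x) - 1 := by
  have hexp : 1 ≤ exp x := one_le_exp hx
  have hx_lower : exp x - 1 ≤ x * exp x := by
    have h := mul_le_mul_of_nonneg_right (add_one_le_exp (-x)) (exp_pos x).le
    rw [exp_neg, inv_mul_cancel₀ (exp_pos x).ne'] at h
    linarith
  rw [show 2 * x = x + x by ring, exp_add]
  nlinarith [sq_nonneg (exp x - 2)]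

section Bennett

variable {Ω : Type*} [MeasurableSpace Ω] {μ : Measure Ω} [IsProbabilityMeasure μ] {Y : Ω → ℝ}
  {d b v t : ℝ}

lemma exp_mul_le_of_abs_sub_le (hb : 0 < b) (ht : 0 < t) {y : ℝ} (hy : |y - d| ≤ b) :
    exp (t * y) ≤
      exp (t * d) * (1 + t * (y - d) + (y - d) ^ 2 / b ^ 2 * (exp (t * b) - t * b - 1)) := by
  have htb : |t * (y - d)| ≤ t * b := by
    rw [abs_mul, abs_of_pos ht]; exact mul_le_mul_of_nonneg_left hy ht.le
  have h := exp_sub_sub_one_le_of_abs_le (mul_pos ht hb) htb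
  rw [mul_pow, mul_pow, mul_div_mul_left _ _ (by positivity)] at h
  calc exp (t * y) = exp (t * d) * exp (t * (y - d)) := by rw [← exp_add]; ring_nf
    _ ≤ _ := by gcongr; linarith

lemma mgf_le_exp_of_abs_sub_le (hY : AEMeasurable Y μ) (hb : 0 < b) (ht : 0 < t)
    (hmean : μ[Y] = d) (hdev : ∀ᵐ ω ∂μ, |Y ω - d| ≤ b) (hvar : variance Y μ ≤ v) :
    mgf Y μ t ≤ exp (t * d + v / b ^ 2 * (exp (t * b) - t * b - 1)) := by
  set k := exp (t * b) - t * b - 1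
  have hYd : MemLp (fun ω ↦ Y ω - d) ⊤ μ :=
    memLp_top_of_bound (hY.sub_const d).aestronglyMeasurable b (by simpa using hdev)
  have hint : Integrable (fun ω ↦ Y ω - d) μ := hYd.integrable le_top
  have hint2 : Integrable (fun ω ↦ (Y ω - d) ^ 2) μ := (hYd.mono_exponent le_top).integrable_sq
  have hcentered : ∫ ω, (Y ω - d) ∂μ = 0 := by
    have hYint : Integrable Y μ := by
      simpa using (integrable_add_const_iff (c := d)).mpr hint
    rw [integral_sub hYint (integrable_const d), hmean]; simp
  have hsecond : ∫ ω, (Y ω - d) ^ 2 ∂μ = variance Y μ := by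
    rw [variance_eq_integral hY, hmean]
  calc mgf Y μ t
      ≤ ∫ ω, exp (t * d) * (1 + t * (Y ω - d) + (Y ω - d) ^ 2 / b ^ 2 * k) ∂μ := by
        refine integral_mono_of_nonneg (.of_forall fun ω ↦ (exp_pos _).le) ?_ ?_
        · exact (((integrable_const 1).add (hint.const_mul t)).add
            ((hint2.div_const _).mul_const k)).const_mul _
        · filter_upwards [hdev] with ω hω using exp_mul_le_of_abs_sub_le hb ht hω
    _ = exp (t * d) * (1 + variance Y μ / b ^ 2 * k) := by
        rw [integral_const_mul, integral_add, integral_add, integral_const_mul, integral_mul_const,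
          integral_div, hcentered, hsecond]
        · simp
        · exact integrable_const 1
        · exact hint.const_mul t
        · exact (integrable_const 1).add (hint.const_mul t)
        · exact (hint2.div_const _).mul_const k
    _ ≤ exp (t * d) * exp (v / b ^ 2 * k) := by
        have hk : 0 ≤ k := by linarith [add_one_le_exp (t * b)]
        have hvar' : variance Y μ / b ^ 2 * k ≤ v / b ^ 2 * k := by gcongr
        gcongr
        linarith [add_one_le_exp (v / b ^ 2 * k)]
    _ = exp (t * d + v / b ^ 2 * k) := (exp_add _ _).symm

end Bennett

lemma measure_sum_ge_le_exp_of_iIndepFun {Ω ι : Type*} [MeasurableSpace Ω] {μ : Measure Ω}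
    [IsFiniteMeasure μ] {X : ι → Ω → ℝ} (hindep : iIndepFun X μ) (hmeas : ∀ i, Measurable (X i))
    (s : Finset ι) {t : ℝ} (ht : 0 ≤ t) (hint : ∀ i ∈ s, Integrable (fun ω ↦ exp (t * X i ω)) μ)
    {g : ι → ℝ} (hg : ∀ i ∈ s, mgf (X i) μ t ≤ exp (g i)) (c : ℝ) :
    μ.real {ω | c ≤ ∑ i ∈ s, X i ω} ≤ exp (-t * c + ∑ i ∈ s, g i) := by
  have h := measure_ge_le_exp_mul_mgf c ht (hindep.integrable_exp_mul_sum hmeas hint)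
  simp only [Finset.sum_apply, hindep.mgf_sum hmeas] at h
  calc _ ≤ exp (-t * c) * ∏ i ∈ s, mgf (X i) μ t := h
    _ ≤ exp (-t * c) * ∏ i ∈ s, exp (g i) := by
        gcongr with i hi
        exacts [fun i _ ↦ mgf_nonneg, hg i hi]
    _ = exp (-t * c + ∑ i ∈ s, g i) := by rw [exp_add, exp_sum]

lemma log_four_mul_sq_div_sq_add_one_pos {b σ : ℝ} (hb : b ≠ 0) (hσ : σ ≠ 0) :
    0 < log (4 * b ^ 2 / σ ^ 2 + 1) :=
  log_pos (lt_add_of_pos_left 1 (by positivity))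

lemma mgf_le_exp_mul_f_sub_one {Ω : Type*} [MeasurableSpace Ω] {μ : Measure Ω}
    [IsProbabilityMeasure μ] {Y : Ω → ℝ} {b σ d : ℝ} (hY : AEMeasurable Y μ) (hb : 0 < b)
    (hσ : 0 < σ) (hmean : μ[Y] = d) (hdev : ∀ᵐ ω ∂μ, |Y ω - d| ≤ b)
    (hvar : variance Y μ ≤ σ ^ 2) :
    mgf Y μ (log (4 * b ^ 2 / σ ^ 2 + 1) / (2 * b)) ≤
      exp (log (4 * b ^ 2 / σ ^ 2 + 1) / (2 * b) * f b σ d - 1) := by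
  set L := log (4 * b ^ 2 / σ ^ 2 + 1)
  have hexpL : exp L = 4 * b ^ 2 / σ ^ 2 + 1 := exp_log (by positivity)
  have hL : 0 < L := log_four_mul_sq_div_sq_add_one_pos hb.ne' hσ.ne'
  refine (mgf_le_exp_of_abs_sub_le hY hb (by positivity) hmean hdev hvar).trans (exp_le_exp.2 ?_)
  have htb : L / (2 * b) * b = L / 2 := by field_simp
  have h4 := four_mul_exp_sub_sub_one_le (half_pos hL).le
  rw [show 2 * (L / 2) = L by ring, hexpL] at h4
  have hrate : σ ^ 2 / b ^ 2 * (exp (L / 2) - L / 2 - 1) ≤ 1 := by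
    calc _ ≤ σ ^ 2 / b ^ 2 * ((4 * b ^ 2 / σ ^ 2 + 1 - 1) / 4) := by gcongr; linarith
      _ = 1 := by field_simp; ring
  have hf : L / (2 * b) * f b σ d = 2 + L / (2 * b) * d := by
    rw [show f b σ d = 4 * b / L + d from rfl]; field_simp; ring
  rw [htb, hf]
  linarith

theorem bound_count_general {Ω : Type*} [MeasureSpace Ω] [IsProbabilityMeasure (ℙ : Measure Ω)]
    (K : ℕ) (b σ : ℝ) (hb : 0 < b) (hσ : 0 < σ)
    (X : Fin K → ℕ → Ω → ℝ) (d : Fin K → ℝ)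
    (hmeas : ∀ a s, Measurable (X a s))
    (hindep : iIndepFun (fun p : Fin K × ℕ => X p.1 p.2) ℙ)
    (hmean : ∀ a s, ∫ ω, X a s ω ∂ℙ = d a)
    (hdev : ∀ a s, ∀ᵐ ω ∂ℙ, |X a s ω - d a| ≤ b)
    (hvar : ∀ a s, variance (X a s) ℙ ≤ σ ^ 2)
    (C : ℝ) (hC : 0 < C) (T : ℕ) (hT : 0 < T)
    (hTval : (T : ℝ) = C / ∑ a, f b σ (d a)) :
    (ℙ {ω | C < ∑ s ∈ Finset.range T, ∑ a, X a s ω}).toReal ≤ Real.exp (-(T : ℝ)) := by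
  set t := log (4 * b ^ 2 / σ ^ 2 + 1) / (2 * b)
  have ht : 0 < t := div_pos (log_four_mul_sq_div_sq_add_one_pos hb.ne' hσ.ne') (by positivity)
  have hsum : 0 < ∑ a, f b σ (d a) := (div_pos_iff_of_pos_left hC).mp (hTval ▸ by exact_mod_cast hT)
  have hK : (1 : ℝ) ≤ K := Nat.one_le_cast.mpr (Nat.pos_of_ne_zero (by rintro rfl; simp at hsum))
  have hCT : C = T * ∑ a, f b σ (d a) := by rw [hTval, div_mul_cancel₀ _ hsum.ne']
  have hchernoff := measure_sum_ge_le_exp_of_iIndepFun hindep (fun p ↦ hmeas p.1 p.2)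
    (univ ×ˢ range T) ht.le
    (fun p _ ↦ integrable_exp_mul_of_le t (d p.1 + b) ht.le (hmeas p.1 p.2).aemeasurable <| by
      filter_upwards [hdev p.1 p.2] with ω h
      linarith [le_abs_self (X p.1 p.2 ω - d p.1)])
    (fun p _ ↦ mgf_le_exp_mul_f_sub_one (hmeas p.1 p.2).aemeasurable hb hσ (hmean p.1 p.2)
      (hdev p.1 p.2) (hvar p.1 p.2)) C
  calc (ℙ {ω | C < ∑ s ∈ range T, ∑ a, X a s ω}).toReal
      ≤ (ℙ : Measure Ω).real {ω | C ≤ ∑ p ∈ univ ×ˢ range T, X p.1 p.2 ω} := by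
        rw [measureReal_def]
        refine ENNReal.toReal_mono (measure_ne_top _ _) (measure_mono fun ω hω ↦ ?_)
        simp only [Set.mem_ofPred_eq, sum_product_right] at hω ⊢
        exact hω.le
    _ ≤ exp (-t * C + ∑ p ∈ univ ×ˢ range T, (t * f b σ (d p.1) - 1)) := hchernoff
    _ = exp (-(T * K)) := by
        rw [sum_product, hCT]
        simp only [sum_const, card_range, nsmul_eq_mul, sum_sub_distrib, ← mul_sum, card_univ,
          Fintype.card_fin]
        congr 1
        ring
    _ ≤ exp (-T) := by gcongr; nlinarith

theorem bound_count {Ω : Type*} [MeasureSpace Ω] [IsProbabilityMeasure (ℙ : Measure Ω)]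
    (K : ℕ) (hK : 1 ≤ K) (b σ : ℝ) (hb : 0 < b) (hσ : 0 < σ) (hσb : σ ^ 2 ≤ b ^ 2)
    (X : Fin K → ℕ → Ω → ℝ) (d : Fin K → ℝ)
    (hmeas : ∀ a s, Measurable (X a s))
    (hindep : iIndepFun (fun p : Fin K × ℕ => X p.1 p.2) ℙ)
    (hident : ∀ a s, IdentDistrib (X a s) (X a 0) ℙ ℙ)
    (hrange : ∀ a s, ∀ᵐ ω ∂ℙ, X a s ω ∈ Set.Icc (0 : ℝ) 1)
    (hmean : ∀ a s, ∫ ω, X a s ω ∂ℙ = d a)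
    (hdev : ∀ a s, ∀ᵐ ω ∂ℙ, |X a s ω - d a| ≤ b)
    (hvar : ∀ a s, variance (X a s) ℙ ≤ σ ^ 2)
    (C : ℝ) (hC : 0 < C) (T : ℕ) (hT : 0 < T)
    (hTval : (T : ℝ) = C / ∑ a, f b σ (d a)) :
    (ℙ {ω | C < ∑ s ∈ Finset.range T, ∑ a, X a s ω}).toReal ≤ Real.exp (-(T : ℝ)) :=
  bound_count_general K b σ hb hσ X d hmeas hindep hmean hdev hvar C hC T hT hTval
end

section
/- Let K ≥ 2 and L ≥ 1 be integers. Let r_2, …, r_K be reals with 1/2 > r_2 ≥ r_3 ≥ … ≥ r_K > 0. For each ℓ ∈ {1,…,L} let C_ℓ > 0 and let d_{ℓ,1} ≥ d_{ℓ,2} ≥ … ≥ d_{ℓ,K} > 0 be reals, and define H_ℓ = (d_{ℓ,1} + d_{ℓ,2})/(1/2 − r_2)² + Σ_{k=3}^K d_{ℓ,k}/(1/2 − r_k)². Let t_1, …, t_K ≥ 0 be reals such that for every ℓ ∈ {1,…,L}: t_1·d_{ℓ,2} + t_2·d_{ℓ,1} + Σ_{k=3}^K t_k·d_{ℓ,k}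 ≤ C_ℓ. Then there exists i ∈ {2,…,K} such that t_i·(1/2 − r_i)² ≤ min_{ℓ ∈ {1,…,L}} ( 2·C_ℓ / H_ℓ ). -/
/-!
Fix the resource `ℓ` attaining the minimum and write `gₖ = (1/2 - rₖ)²`. With the weights
`(d₁ + d₂)/g₂` on arm 2 and `dₖ/gₖ` on arm `k ≥ 3`, whose total is `H`, the weighted sum of the
quantities `tₖ gₖ` is `t₂ (d₁ + d₂) + ∑ₖ tₖ dₖ`. Since `d₂ ≤ d₁`, this is at most twice the
consumption of resource `ℓ`, hence at most `2 C`; so the weighted mean of the `tₖ gₖ` is at most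
`2 C / H`, and one of them must be.
-/

open Finset

lemma antitoneOn_Icc_of_succ_le {α : Type*} [Preorder α] {f : ℕ → α} {a b : ℕ}
    (hf : ∀ k, a ≤ k → k < b → f (k + 1) ≤ f k) : AntitoneOn f (Set.Icc a b) :=
  antitoneOn_of_succ_le Set.ordConnected_Icc fun k _ hk hk' => hf k hk.1 (Nat.lt_of_succ_le hk'.2)

lemma exists_le_of_mul_add_sum_le {ι R : Type*} [CommRing R] [LinearOrder R]
    [IsStrictOrderedRing R] {s : Finset ι} {w x : ι → R} {a x₀ c : R} (ha : 0 < a)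
    (hw : ∀ i ∈ s, 0 ≤ w i) (h : a * x₀ + ∑ i ∈ s, w i * x i ≤ c * (a + ∑ i ∈ s, w i)) :
    x₀ ≤ c ∨ ∃ i ∈ s, x i ≤ c := by
  by_contra! hlt
  obtain ⟨hx₀, hx⟩ := hlt
  have h₀ : c * a < a * x₀ := mul_comm a c ▸ mul_lt_mul_of_pos_left hx₀ ha
  have hs : c * ∑ i ∈ s, w i ≤ ∑ i ∈ s, w i * x i := by
    rw [mul_sum]
    exact sum_le_sum fun i hi => mul_comm (w i) c ▸ mul_le_mul_of_nonneg_left (hx i hi).le (hw i hi)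
  rw [mul_add] at h
  linarith

lemma exists_mul_le_two_mul_div {K : ℕ} {g d t : ℕ → ℝ} {C : ℝ} (hK : 2 ≤ K)
    (hg : ∀ k ∈ Icc 2 K, 0 < g k) (hd : ∀ k ∈ Icc 1 K, 0 < d k) (hd₂₁ : d 2 ≤ d 1)
    (ht : ∀ k ∈ Icc 1 K, 0 ≤ t k)
    (hcons : t 1 * d 2 + t 2 * d 1 + ∑ k ∈ Icc 3 K, t k * d k ≤ C) :
    ∃ i ∈ Icc 2 K, t i * g i ≤ 2 * C / ((d 1 + d 2) / g 2 + ∑ k ∈ Icc 3 K, d k / g k) := by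
  have mem₁ : ∀ k ∈ Icc 3 K, k ∈ Icc 1 K := fun k hk => Icc_subset_Icc_left (by norm_num) hk
  have mem₂ : ∀ k ∈ Icc 3 K, k ∈ Icc 2 K := fun k hk => Icc_subset_Icc_left (by norm_num) hk
  have h1 : 1 ∈ Icc 1 K := mem_Icc.2 ⟨le_rfl, by omega⟩
  have h2' : 2 ∈ Icc 1 K := mem_Icc.2 ⟨by norm_num, hK⟩
  have h2 : 2 ∈ Icc 2 K := mem_Icc.2 ⟨le_rfl, hK⟩
  have hd₁ := hd 1 h1
  have hd₂ := hd 2 h2'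
  have hw : ∀ k ∈ Icc 3 K, 0 ≤ d k / g k := fun k hk =>
    (div_pos (hd k (mem₁ k hk)) (hg k (mem₂ k hk))).le
  have ha : 0 < (d 1 + d 2) / g 2 := div_pos (by linarith) (hg 2 h2)
  set H := (d 1 + d 2) / g 2 + ∑ k ∈ Icc 3 K, d k / g k
  have hH : 0 < H := by linarith [sum_nonneg hw]
  have hweighted :
      (d 1 + d 2) / g 2 * (t 2 * g 2) + ∑ k ∈ Icc 3 K, d k / g k * (t k * g k) ≤ 2 * C / H * H := by
    have h₂ : (d 1 + d 2) / g 2 * (t 2 * g 2) = t 2 * (d 1 + d 2) := by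
      field_simp [(hg 2 h2).ne']
    have hk : ∀ k ∈ Icc 3 K, d k / g k * (t k * g k) = t k * d k := fun k hk => by
      field_simp [(hg k (mem₂ k hk)).ne']
    have hrest : 0 ≤ ∑ k ∈ Icc 3 K, t k * d k :=
      sum_nonneg fun k hk => mul_nonneg (ht k (mem₁ k hk)) (hd k (mem₁ k hk)).le
    rw [h₂, sum_congr rfl hk, div_mul_cancel₀ _ hH.ne']
    linarith [mul_nonneg (ht 1 h1) hd₂.le, mul_le_mul_of_nonneg_left hd₂₁ (ht 2 h2')]
  rcases exists_le_of_mul_add_sum_le ha hw hweighted with h | ⟨i, hi, h⟩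
  · exact ⟨2, h2, h⟩
  · exact ⟨i, mem₂ i hi, h⟩

theorem exists_underexplored_arm_general (K L : ℕ) (hK : 2 ≤ K) (hL : 1 ≤ L)
    (r : ℕ → ℝ) (hr2 : r 2 < 1 / 2)
    (hrmono : ∀ k, 2 ≤ k → k < K → r (k + 1) ≤ r k)
    (C : ℕ → ℝ)
    (d : ℕ → ℕ → ℝ)
    (hdmono : ∀ ℓ, 1 ≤ ℓ → ℓ ≤ L → ∀ k, 1 ≤ k → k < K → d ℓ (k + 1) ≤ d ℓ k)
    (hdK : ∀ ℓ, 1 ≤ ℓ → ℓ ≤ L → 0 < d ℓ K)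
    (H : ℕ → ℝ)
    (hH : ∀ ℓ, H ℓ = (d ℓ 1 + d ℓ 2) / (1 / 2 - r 2) ^ 2
      + ∑ k ∈ Finset.Icc 3 K, d ℓ k / (1 / 2 - r k) ^ 2)
    (t : ℕ → ℝ) (ht : ∀ k, 1 ≤ k → k ≤ K → 0 ≤ t k)
    (hcons : ∀ ℓ, 1 ≤ ℓ → ℓ ≤ L →
      t 1 * d ℓ 2 + t 2 * d ℓ 1 + ∑ k ∈ Finset.Icc 3 K, t k * d ℓ k ≤ C ℓ) :
    ∃ i, 2 ≤ i ∧ i ≤ K ∧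
      t i * (1 / 2 - r i) ^ 2 ≤
        (Finset.Icc 1 L).inf' (Finset.nonempty_Icc.mpr hL) (fun ℓ => 2 * C ℓ / H ℓ) := by
  obtain ⟨ℓ, hℓ, hmin⟩ := exists_mem_eq_inf' (nonempty_Icc.mpr hL) (fun ℓ => 2 * C ℓ / H ℓ)
  obtain ⟨hℓ₁, hℓL⟩ := mem_Icc.1 hℓ
  have hr := antitoneOn_Icc_of_succ_le hrmono
  have hdℓ := antitoneOn_Icc_of_succ_le (hdmono ℓ hℓ₁ hℓL)
  have hg : ∀ k ∈ Icc 2 K, 0 < (1 / 2 - r k) ^ 2 := fun k hk => by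
    have := hr ⟨le_rfl, hK⟩ (mem_Icc.1 hk) (mem_Icc.1 hk).1
    exact pow_pos (by linarith) 2
  have hd : ∀ k ∈ Icc 1 K, 0 < d ℓ k := fun k hk =>
    (hdK ℓ hℓ₁ hℓL).trans_le (hdℓ (mem_Icc.1 hk) ⟨by omega, le_rfl⟩ (mem_Icc.1 hk).2)
  obtain ⟨i, hi, hti⟩ := exists_mul_le_two_mul_div hK hg hd (hdmono ℓ hℓ₁ hℓL 1 le_rfl (by omega))
    (fun k hk => ht k (mem_Icc.1 hk).1 (mem_Icc.1 hk).2) (hcons ℓ hℓ₁ hℓL)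
  exact ⟨i, (mem_Icc.1 hi).1, (mem_Icc.1 hi).2, by rwa [hmin, hH]⟩

theorem exists_underexplored_arm (K L : ℕ) (hK : 2 ≤ K) (hL : 1 ≤ L)
    (r : ℕ → ℝ) (hr2 : r 2 < 1 / 2)
    (hrmono : ∀ k, 2 ≤ k → k < K → r (k + 1) ≤ r k) (hrK : 0 < r K)
    (C : ℕ → ℝ) (hC : ∀ ℓ, 1 ≤ ℓ → ℓ ≤ L → 0 < C ℓ)
    (d : ℕ → ℕ → ℝ)
    (hdmono : ∀ ℓ, 1 ≤ ℓ → ℓ ≤ L → ∀ k, 1 ≤ k → k < K → d ℓ (k + 1) ≤ d ℓ k)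
    (hdK : ∀ ℓ, 1 ≤ ℓ → ℓ ≤ L → 0 < d ℓ K)
    (H : ℕ → ℝ)
    (hH : ∀ ℓ, H ℓ = (d ℓ 1 + d ℓ 2) / (1 / 2 - r 2) ^ 2
      + ∑ k ∈ Finset.Icc 3 K, d ℓ k / (1 / 2 - r k) ^ 2)
    (t : ℕ → ℝ) (ht : ∀ k, 1 ≤ k → k ≤ K → 0 ≤ t k)
    (hcons : ∀ ℓ, 1 ≤ ℓ → ℓ ≤ L →
      t 1 * d ℓ 2 + t 2 * d ℓ 1 + ∑ k ∈ Finset.Icc 3 K, t k * d ℓ k ≤ C ℓ) :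
    ∃ i, 2 ≤ i ∧ i ≤ K ∧
      t i * (1 / 2 - r i) ^ 2 ≤
        (Finset.Icc 1 L).inf' (Finset.nonempty_Icc.mpr hL) (fun ℓ => 2 * C ℓ / H ℓ) :=
  exists_underexplored_arm_general K L hK hL r hr2 hrmono C d hdmono hdK H hH t ht hcons
end

section
/- Let K ≥ 2 be an integer, let r_2, …, r_K be reals with 1/2 > r_2 ≥ r_3 ≥ … ≥ r_K > 0, set r_1 = 1/2, let d_1 ≥ d_2 ≥ … ≥ d_K > 0 be reals, and let i ∈ {2,…,K}. Then (d_1 + d_2)/(1/2 − r_i)² + Σ_{j=3}^{i} d_j / ((1 − r_i) − r_{j−1})² + Σ_{j=i+1}^{K} d_j / ((1 − r_i) − r_j)² ≤ (d_1 + d_2)/(1/2 − r_2)² + Σ_{j=3}^{K} d_j / (1/2 − r_j)². -/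
/-!
The inequality holds term by term: every gap of the flipped instance dominates the gap of the
base instance it is paired with. Indeed `1/2 - r i ≥ 1/2 - r 2`; for `3 ≤ j ≤ i`,
`(1 - r i) - r (j - 1) ≥ 1/2 - r j` because `r i ≤ r j` and `r (j - 1) < 1/2`; and for `j > i`,
`(1 - r i) - r j ≥ 1/2 - r j` because `r i < 1/2`. The numerators are nonnegative since `d` is
antitone with `d K > 0`.
-/

open Finset

lemma sum_Icc_add_one_consecutive {M : Type*} [AddCommMonoid M] (f : ℕ → M) {m n k : ℕ}
    (hmn : m ≤ n) (hnk : n ≤ k) :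
    ∑ j ∈ Icc (m + 1) k, f j = ∑ j ∈ Icc (m + 1) n, f j + ∑ j ∈ Icc (n + 1) k, f j := by
  simp only [Icc_add_one_left_eq_Ioc, sum_Ioc_consecutive f hmn hnk]

lemma div_sq_le_div_sq_of_le {c a b : ℝ} (hc : 0 ≤ c) (ha : 0 < a) (hab : a ≤ b) :
    c / b ^ 2 ≤ c / a ^ 2 := by
  gcongr

theorem H1_flipped_le_H1_base_general (K : ℕ)
    (r : ℕ → ℝ) (hr2 : r 2 < 1 / 2)
    (hrmono : ∀ k, 2 ≤ k → k < K → r (k + 1) ≤ r k)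
    (d : ℕ → ℝ) (hdmono : ∀ k, 1 ≤ k → k < K → d (k + 1) ≤ d k) (hdK : 0 < d K)
    (i : ℕ) (hi2 : 2 ≤ i) (hiK : i ≤ K) :
    (d 1 + d 2) / (1 / 2 - r i) ^ 2
        + ∑ j ∈ Finset.Icc 3 i, d j / ((1 - r i) - r (j - 1)) ^ 2
        + ∑ j ∈ Finset.Icc (i + 1) K, d j / ((1 - r i) - r j) ^ 2
      ≤ (d 1 + d 2) / (1 / 2 - r 2) ^ 2
        + ∑ j ∈ Finset.Icc 3 K, d j / (1 / 2 - r j) ^ 2 := by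
  have hd_nonneg : ∀ j, 1 ≤ j → j ≤ K → 0 ≤ d j := fun j h1 h2 =>
    hdK.le.trans (antitoneOn_Icc_of_succ_le hdmono ⟨h1, h2⟩ ⟨h1.trans h2, le_rfl⟩ h2)
  have hr_le : ∀ j k, 2 ≤ j → j ≤ k → k ≤ K → r k ≤ r j := fun j k hj hjk hk =>
    antitoneOn_Icc_of_succ_le hrmono ⟨hj, hjk.trans hk⟩ ⟨hj.trans hjk, hk⟩ hjk
  have hr_lt : ∀ j, 2 ≤ j → j ≤ K → r j < 1 / 2 := fun j hj hjK =>
    (hr_le 2 j le_rfl hj hjK).trans_lt hr2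
  rw [sum_Icc_add_one_consecutive _ (show 2 ≤ i from hi2) hiK, ← add_assoc]
  refine add_le_add (add_le_add ?_ (sum_le_sum fun j hj => ?_)) (sum_le_sum fun j hj => ?_)
  · have hri := hr_le 2 i le_rfl hi2 hiK
    exact div_sq_le_div_sq_of_le
      (add_nonneg (hd_nonneg 1 le_rfl (by omega)) (hd_nonneg 2 one_le_two (by omega)))
      (by linarith) (by linarith)
  · obtain ⟨hj3, hji⟩ := mem_Icc.mp hj
    have hrj := hr_lt j (by omega) (by omega)
    have hrj' := hr_lt (j - 1) (by omega) (by omega)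
    have hri := hr_le j i (by omega) hji hiK
    exact div_sq_le_div_sq_of_le (hd_nonneg j (by omega) (by omega)) (by linarith) (by linarith)
  · obtain ⟨hij, hjK⟩ := mem_Icc.mp hj
    have hrj := hr_lt j (by omega) hjK
    have hri := hr_lt i hi2 hiK
    exact div_sq_le_div_sq_of_le (hd_nonneg j (by omega) hjK) (by linarith) (by linarith)

theorem H1_flipped_le_H1_base (K : ℕ) (hK : 2 ≤ K)
    (r : ℕ → ℝ) (hr1 : r 1 = 1 / 2) (hr2 : r 2 < 1 / 2)
    (hrmono : ∀ k, 2 ≤ k → k < K → r (k + 1) ≤ r k) (hrK : 0 < r K)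
    (d : ℕ → ℝ) (hdmono : ∀ k, 1 ≤ k → k < K → d (k + 1) ≤ d k) (hdK : 0 < d K)
    (i : ℕ) (hi2 : 2 ≤ i) (hiK : i ≤ K) :
    (d 1 + d 2) / (1 / 2 - r i) ^ 2
        + ∑ j ∈ Finset.Icc 3 i, d j / ((1 - r i) - r (j - 1)) ^ 2
        + ∑ j ∈ Finset.Icc (i + 1) K, d j / ((1 - r i) - r j) ^ 2
      ≤ (d 1 + d 2) / (1 / 2 - r 2) ^ 2
        + ∑ j ∈ Finset.Icc 3 K, d j / (1 / 2 - r j) ^ 2 :=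
  H1_flipped_le_H1_base_general K r hr2 hrmono d hdmono hdK i hi2 hiK
end

section
/- Let K ≥ 2 be an integer, let r_2, …, r_K be reals with 1/2 > r_2 ≥ r_3 ≥ … ≥ r_K > 0, let d_1 ≥ d_2 ≥ … ≥ d_K > 0 be reals, and let i ∈ {2,…,K}. Define gaps g_2 = 1/2 − r_i, g_j = (1 − r_i) − r_{j−1} for 3 ≤ j ≤ i, and g_j = (1 − r_i) − r_j for i+1 ≤ j ≤ K. Then max_{2 ≤ k ≤ K} ( (Σ_{a=1}^k d_a) / g_k² ) ≤ max_{2 ≤ k ≤ K} ( (Σ_{a=1}^k d_a) / (1/2 − r_k)² ). -/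
/-! The two maxima have the same numerators, which are nonnegative, so it suffices to compare
denominators termwise: `1/2 - r k ≤ g k` for every `k`. This holds because `r` is antitone and stays
below `1/2`: in each case `g k` is `1 - r i` (at least `1/2`) minus a mean reward that is either
below `1/2` or at most `r k`, with `r i ≤ r k` compensating in the middle range. -/

lemma antitoneOn_Icc_of_add_one_le {β : Type*} [Preorder β] {f : ℕ → β} {a b : ℕ}
    (hf : ∀ k, a ≤ k → k < b → f (k + 1) ≤ f k) : AntitoneOn f (Set.Icc a b) :=
  antitoneOn_of_add_one_le Set.ordConnected_Icc fun k _ hk hk1 => hf k hk.1 (by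
    simp only [Set.mem_Icc] at hk1; omega)

lemma half_sub_le_flipped_gap {K : ℕ} {r g : ℕ → ℝ} (hr : AntitoneOn r (Set.Icc 2 K))
    (hr2 : r 2 < 1 / 2) {i : ℕ} (hi2 : 2 ≤ i) (hiK : i ≤ K) (hg2 : g 2 = 1 / 2 - r i)
    (hgmid : ∀ j, 3 ≤ j → j ≤ i → g j = (1 - r i) - r (j - 1))
    (hgtail : ∀ j, i + 1 ≤ j → j ≤ K → g j = (1 - r i) - r j)
    {k : ℕ} (hk2 : 2 ≤ k) (hkK : k ≤ K) : 1 / 2 - r k ≤ g k := by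
  have hr_lt_half : ∀ j, 2 ≤ j → j ≤ K → r j < 1 / 2 := fun j hj2 hjK =>
    (hr ⟨le_rfl, hj2.trans hjK⟩ ⟨hj2, hjK⟩ hj2).trans_lt hr2
  obtain rfl | hk3 := hk2.eq_or_lt
  · rw [hg2]
    linarith [hr ⟨le_rfl, hiK.trans' hi2⟩ ⟨hi2, hiK⟩ hi2]
  obtain hki | hik := le_or_gt k i
  · rw [hgmid k hk3 hki]
    linarith [hr ⟨hk2, hki.trans hiK⟩ ⟨hi2, hiK⟩ hki, hr_lt_half (k - 1) (by omega) (by omega)]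
  · rw [hgtail k hik hkK]
    linarith [hr_lt_half i hi2 hiK]

theorem H2_flipped_le_H2_base_general (K : ℕ) (hK : 2 ≤ K)
    (r : ℕ → ℝ) (hr2 : r 2 < 1 / 2)
    (hrmono : ∀ k, 2 ≤ k → k < K → r (k + 1) ≤ r k)
    (d : ℕ → ℝ) (hdmono : ∀ k, 1 ≤ k → k < K → d (k + 1) ≤ d k) (hdK : 0 < d K)
    (i : ℕ) (hi2 : 2 ≤ i) (hiK : i ≤ K)
    (g : ℕ → ℝ) (hg2 : g 2 = 1 / 2 - r i)
    (hgmid : ∀ j, 3 ≤ j → j ≤ i → g j = (1 - r i) - r (j - 1))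
    (hgtail : ∀ j, i + 1 ≤ j → j ≤ K → g j = (1 - r i) - r j) :
    (Finset.Icc 2 K).sup' (Finset.nonempty_Icc.mpr hK)
        (fun k => (∑ a ∈ Finset.Icc 1 k, d a) / (g k) ^ 2)
      ≤ (Finset.Icc 2 K).sup' (Finset.nonempty_Icc.mpr hK)
        (fun k => (∑ a ∈ Finset.Icc 1 k, d a) / (1 / 2 - r k) ^ 2) := by
  have hr : AntitoneOn r (Set.Icc 2 K) := antitoneOn_Icc_of_add_one_le hrmono
  have hd : AntitoneOn d (Set.Icc 1 K) := antitoneOn_Icc_of_add_one_le hdmono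
  refine Finset.sup'_mono_fun fun k hk => ?_
  obtain ⟨hk2, hkK⟩ := Finset.mem_Icc.mp hk
  have hsum : 0 ≤ ∑ a ∈ Finset.Icc 1 k, d a := Finset.sum_nonneg fun a ha => by
    obtain ⟨ha1, hak⟩ := Finset.mem_Icc.mp ha
    exact (hdK.trans_le (hd ⟨ha1, hak.trans hkK⟩ ⟨by omega, le_rfl⟩ (hak.trans hkK))).le
  have hbase : 0 < 1 / 2 - r k := by
    linarith [hr ⟨le_rfl, hK⟩ ⟨hk2, hkK⟩ hk2]
  exact div_le_div_of_nonneg_left hsum (pow_pos hbase 2) (pow_le_pow_left₀ hbase.le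
    (half_sub_le_flipped_gap hr hr2 hi2 hiK hg2 hgmid hgtail hk2 hkK) 2)

theorem H2_flipped_le_H2_base (K : ℕ) (hK : 2 ≤ K)
    (r : ℕ → ℝ) (hr2 : r 2 < 1 / 2)
    (hrmono : ∀ k, 2 ≤ k → k < K → r (k + 1) ≤ r k) (hrK : 0 < r K)
    (d : ℕ → ℝ) (hdmono : ∀ k, 1 ≤ k → k < K → d (k + 1) ≤ d k) (hdK : 0 < d K)
    (i : ℕ) (hi2 : 2 ≤ i) (hiK : i ≤ K)
    (g : ℕ → ℝ) (hg2 : g 2 = 1 / 2 - r i)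
    (hgmid : ∀ j, 3 ≤ j → j ≤ i → g j = (1 - r i) - r (j - 1))
    (hgtail : ∀ j, i + 1 ≤ j → j ≤ K → g j = (1 - r i) - r j) :
    (Finset.Icc 2 K).sup' (Finset.nonempty_Icc.mpr hK)
        (fun k => (∑ a ∈ Finset.Icc 1 k, d a) / (g k) ^ 2)
      ≤ (Finset.Icc 2 K).sup' (Finset.nonempty_Icc.mpr hK)
        (fun k => (∑ a ∈ Finset.Icc 1 k, d a) / (1 / 2 - r k) ^ 2) :=
  H2_flipped_le_H2_base_general K hK r hr2 hrmono d hdmono hdK i hi2 hiK g hg2 hgmid hgtail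
end

section
/- The function d ↦ f(1, √(d(1−d)), d) / d, i.e. d ↦ ( 4 / log( 4/(d(1−d)) + 1 ) + d ) / d, tends to +∞ as d → 0⁺ (limit over d ∈ (0,1) approaching 0 from the right). -/
/-!
Writing `L d = log (4 / (d (1 - d)) + 1)`, the ratio equals `4 / (d L d) + 1`. Expanding the
logarithm, `d L d = d log (4 + d (1 - d)) - d log d - d log (1 - d)`, which is continuous at `0`
with value `0` since `d log d → 0`; as `d L d > 0`, its reciprocal tends to `+∞`.
-/

open Real Filter Set Topology

lemma log_div_mul_one_sub_add_one {c d : ℝ} (hc : 0 ≤ c) (hd₀ : 0 < d) (hd₁ : d < 1) :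
    log (c / (d * (1 - d)) + 1) = log (c + d * (1 - d)) - log d - log (1 - d) := by
  have hd : 0 < d * (1 - d) := mul_pos hd₀ (sub_pos.2 hd₁)
  rw [div_add_one hd.ne', log_div (by positivity) hd.ne', log_mul hd₀.ne' (sub_pos.2 hd₁).ne']
  ring

lemma tendsto_mul_log_div_mul_one_sub_add_one {c : ℝ} (hc : 0 < c) :
    Tendsto (fun d : ℝ => d * log (c / (d * (1 - d)) + 1)) (𝓝[Ioo 0 1] 0) (𝓝[>] 0) := by
  have hcont : ContinuousAt
      (fun d : ℝ => d * log (c + d * (1 - d)) - d * log d - d * log (1 - d)) 0 := by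
    have hlog₁ : ContinuousAt (fun d : ℝ => log (c + d * (1 - d))) 0 :=
      (continuousAt_log (by simp [hc.ne'])).comp (by fun_prop)
    have hlog₂ : ContinuousAt (fun d : ℝ => log (1 - d)) 0 :=
      (continuousAt_log (by simp)).comp (by fun_prop)
    exact ((continuousAt_id.mul hlog₁).sub continuous_mul_log.continuousAt).sub
      (continuousAt_id.mul hlog₂)
  refine tendsto_nhdsWithin_iff.2 ⟨?_, ?_⟩
  · refine ((hcont.tendsto.mono_left nhdsWithin_le_nhds).congr' ?_).trans_eq (by simp)
    filter_upwards [self_mem_nhdsWithin] with d ⟨hd₀, hd₁⟩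
    rw [log_div_mul_one_sub_add_one hc.le hd₀ hd₁]
    ring
  · filter_upwards [self_mem_nhdsWithin] with d ⟨hd₀, hd₁⟩
    have hd : 0 < d * (1 - d) := mul_pos hd₀ (sub_pos.2 hd₁)
    exact mul_pos hd₀ (log_pos (lt_add_of_pos_left 1 (div_pos hc hd)))

lemma div_add_self_div_self {K : Type*} [Field K] {c l x : K} (hl : l ≠ 0) (hx : x ≠ 0) :
    (c / l + x) / x = c * (x * l)⁻¹ + 1 := by
  field_simp

/-- The effective consumption measure of a Bernoulli(d) consumption, divided by the mean
consumption `d`, tends to `+∞` as `d → 0⁺` (over `d ∈ (0,1)`). -/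
theorem effective_consumption_bernoulli_tendsto_atTop :
    Filter.Tendsto (fun d : ℝ => (4 / Real.log (4 / (d * (1 - d)) + 1) + d) / d)
      (nhdsWithin 0 (Set.Ioo 0 1)) Filter.atTop := by
  have hprod := tendsto_mul_log_div_mul_one_sub_add_one (c := 4) four_pos
  refine (tendsto_atTop_add_const_right _ 1
    (hprod.inv_tendsto_nhdsGT_zero.const_mul_atTop four_pos)).congr' ?_
  filter_upwards [self_mem_nhdsWithin, hprod.eventually_mem self_mem_nhdsWithin]
    with d hd hpos
  exact (div_add_self_div_self (pos_of_mul_pos_right hpos hd.1.le).ne' hd.1.ne').symm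
end
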